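/- arXiv:1407.5649 — 3 statements merged into one kernel-verified Lean document; each statement's English description precedes it below -/
import Mathlib

section
/- Let V : Δ(Ω) → ℝ be bounded, continuous and concave. Then for every p ∉ I, sup_{μ ∈ S(p)} [ (1−δ)·μ(I) + δ·∫ V(φ(q)) dμ(q) ] equals the supremum of the same expression over those μ ∈ S(p) that are carried by at most two points of Δ(Ω). (At any belief outside the investment region, splittings into at most two posterior beliefs suffice.) -/
open MeasureTheory Set

noncomputable section

variable {Ω : Type*}

/-- The investment region `I = {p ∈ Δ(Ω) : ⟨p,r⟩ ≥ 0}`. -/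
def invest [Fintype Ω] (r : Ω → ℝ) : Set (Ω → ℝ) :=
  {p | p ∈ stdSimplex ℝ Ω ∧ 0 ≤ ∑ ω, p ω * r ω}

/-- The set `S(p)` of splittings at `p`: Borel probability measures on `ℝ^Ω` carried by the
simplex `Δ(Ω)` with barycenter `p`. -/
def Splittings [Fintype Ω] (p : Ω → ℝ) : Set (Measure (Ω → ℝ)) :=
  {μ | IsProbabilityMeasure μ ∧ μ (stdSimplex ℝ Ω) = 1 ∧ ∫ q, q ∂μ = p}

/-- The payoff `(1−δ)·μ(I) + δ·∫ V(φ(q)) dμ(q)` appearing in the dynamic programming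
equation. -/
def dppPayoff [Fintype Ω] (r : Ω → ℝ) (δ : ℝ) (φ : (Ω → ℝ) → Ω → ℝ)
    (V : (Ω → ℝ) → ℝ) (μ : Measure (Ω → ℝ)) : ℝ :=
  (1 - δ) * (μ (invest r)).toReal + δ * ∫ q in stdSimplex ℝ Ω, V (φ q) ∂μ

/-- `V` satisfies the dynamic programming equation
`V(p) = sup_{μ ∈ S(p)} [(1−δ)·μ(I) + δ·∫ V(φ(q)) dμ(q)]` on the simplex. -/
def SatisfiesDPP [Fintype Ω] (r : Ω → ℝ) (δ : ℝ) (φ : (Ω → ℝ) → Ω → ℝ)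
    (V : (Ω → ℝ) → ℝ) : Prop :=
  ∀ p ∈ stdSimplex ℝ Ω, V p = sSup (dppPayoff r δ φ V '' Splittings p)

/-!
Given a splitting `μ` of `p`, replace its parts on `I` and on `Δ(Ω) \ I` by point masses of the
same weights at their conditional barycenters. The barycenter stays `p`; the barycenter of the
part on `I` lies in the closed convex set `I`, so the mass of `I` does not decrease; and by
Jensen's inequality for `V ∘ φ`, which is concave because `φ` is affine, neither does the
continuation value. So every payoff is dominated by the payoff of a two-point splitting.
-/

open scoped ENNReal

namespace MeasureTheory.Measure

variable {E : Type*} [NormedAddCommGroup E] [NormedSpace ℝ E] [MeasurableSpace E]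
  {μ : Measure E} {s t K : Set E}

/-- Zero when `μ s = 0`, whatever the junk value of the average `⨍ x in s, x ∂μ`. -/
def collapse (μ : Measure E) (s : Set E) : Measure E :=
  μ s • dirac (⨍ x in s, x ∂μ)

lemma collapse_apply_of_setAverage_mem (h : ⨍ x in s, x ∂μ ∈ t) : μ.collapse s t = μ s := by
  simp [collapse, dirac_apply_of_mem h]

lemma integrable_collapse [MeasurableSingletonClass E] {F : Type*} [NormedAddCommGroup F]
    (f : E → F) (hs : μ s ≠ ∞) : Integrable f (μ.collapse s) :=
  (integrable_dirac enorm_lt_top).smul_measure hs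

variable [CompleteSpace E]

lemma collapse_apply_of_subset (hK : Convex ℝ K) (hKc : IsClosed K) (hsm : MeasurableSet s)
    (hsK : s ⊆ K) (hs : μ s ≠ ∞) (hint : IntegrableOn (fun x ↦ x) s μ) :
    μ.collapse s K = μ s := by
  by_cases h0 : μ s = 0
  · simp [collapse, h0]
  exact collapse_apply_of_setAverage_mem <|
    hK.set_average_mem hKc h0 hs (ae_restrict_of_forall_mem hsm hsK) hint

variable [MeasurableSingletonClass E]

lemma integral_id_collapse (hs : μ s ≠ ∞) : ∫ x, x ∂μ.collapse s = ∫ x in s, x ∂μ := by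
  rw [collapse, integral_smul_measure, integral_dirac, ← measure_smul_setAverage _ hs,
    measureReal_def]

lemma setIntegral_le_setIntegral_collapse {g : E → ℝ} (hg : ConcaveOn ℝ K g)
    (hgc : ContinuousOn g K) (hKc : IsClosed K) (hsm : MeasurableSet s) (hsK : s ⊆ K)
    (hs : μ s ≠ ∞) (hint : IntegrableOn (fun x ↦ x) s μ) (hgi : IntegrableOn g s μ) :
    ∫ x in s, g x ∂μ ≤ ∫ x in K, g x ∂μ.collapse s := by
  classical
  by_cases h0 : μ s = 0
  · simp [collapse, h0, restrict_eq_zero.mpr h0]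
  have hsK' : ∀ᵐ x ∂μ.restrict s, x ∈ K := ae_restrict_of_forall_mem hsm hsK
  have hmem := hg.1.set_average_mem hKc h0 hs hsK' hint
  have hjensen := hg.le_map_set_average hgc hKc h0 hs hsK' hint hgi
  rw [collapse, restrict_smul, integral_smul_measure, setIntegral_dirac, if_pos hmem,
    ← measure_smul_setAverage _ hs, measureReal_def, smul_eq_mul, smul_eq_mul]
  exact mul_le_mul_of_nonneg_left hjensen ENNReal.toReal_nonneg

end MeasureTheory.Measure

section TwoPoint

open MeasureTheory.Measure

variable {E : Type*} [NormedAddCommGroup E] [NormedSpace ℝ E] [CompleteSpace E]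
  [MeasurableSpace E] [BorelSpace E] {μ : Measure E} [IsFiniteMeasure μ] {K A : Set E}

theorem exists_twoPoint_dominating_measure (hK : IsCompact K) (hKconv : Convex ℝ K)
    (hA : IsClosed A) (hAconv : Convex ℝ A) (hAK : A ⊆ K) (hμK : ∀ᵐ x ∂μ, x ∈ K) {g : E → ℝ}
    (hg : ConcaveOn ℝ K g) (hgc : ContinuousOn g K) :
    ∃ ν : Measure E, ν univ = μ univ ∧ ν K = μ univ ∧ ∫ x, x ∂ν = ∫ x, x ∂μ ∧
      (∃ q₁ q₂, ν {q₁, q₂} = μ univ) ∧ μ A ≤ ν A ∧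
      ∫ x in K, g x ∂μ ≤ ∫ x in K, g x ∂ν := by
  have hKm : MeasurableSet K := hK.isClosed.measurableSet
  have hAm : MeasurableSet A := hA.measurableSet
  have hBm : MeasurableSet (K \ A) := hKm.diff hAm
  have hint : IntegrableOn (fun x ↦ x) K μ := continuousOn_id.integrableOn_compact hK
  have hgi : IntegrableOn g K μ := hgc.integrableOn_compact hK
  have hμ : μ.restrict K = μ := restrict_eq_self_of_ae_mem hμK
  have hsplit : μ A + μ (K \ A) = μ univ := by
    rw [← measure_union disjoint_sdiff_right hBm, union_sdiff_cancel hAK,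
      ← (ae_mem_iff_measure_eq hKm.nullMeasurableSet).1 hμK]
  have hAfin : μ A ≠ ∞ := measure_ne_top μ A
  have hBfin : μ (K \ A) ≠ ∞ := measure_ne_top μ _
  refine ⟨μ.collapse A + μ.collapse (K \ A), ?_, ?_, ?_,
    ⟨⨍ x in A, x ∂μ, ⨍ x in K \ A, x ∂μ, ?_⟩, ?_, ?_⟩
  · rw [Measure.add_apply, collapse_apply_of_setAverage_mem (mem_univ _),
      collapse_apply_of_setAverage_mem (mem_univ _), hsplit]
  · rw [Measure.add_apply,
      collapse_apply_of_subset hKconv hK.isClosed hAm hAK hAfin (hint.mono_set hAK),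
      collapse_apply_of_subset hKconv hK.isClosed hBm sdiff_subset hBfin
        (hint.mono_set sdiff_subset), hsplit]
  · rw [integral_add_measure (integrable_collapse _ hAfin) (integrable_collapse _ hBfin),
      integral_id_collapse hAfin, integral_id_collapse hBfin,
      ← setIntegral_union disjoint_sdiff_right hBm (hint.mono_set hAK)
        (hint.mono_set sdiff_subset),
      union_sdiff_cancel hAK, hμ]
  · rw [Measure.add_apply, collapse_apply_of_setAverage_mem (mem_insert _ _),
      collapse_apply_of_setAverage_mem (mem_insert_of_mem _ (mem_singleton _)), hsplit]
  · rw [Measure.add_apply,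
      collapse_apply_of_subset hAconv hA hAm subset_rfl hAfin (hint.mono_set hAK)]
    exact le_self_add
  · calc ∫ x in K, g x ∂μ = ∫ x in A, g x ∂μ + ∫ x in K \ A, g x ∂μ := by
          rw [← setIntegral_union disjoint_sdiff_right hBm (hgi.mono_set hAK)
            (hgi.mono_set sdiff_subset), union_sdiff_cancel hAK]
      _ ≤ ∫ x in K, g x ∂μ.collapse A + ∫ x in K, g x ∂μ.collapse (K \ A) := by
          exact add_le_add
            (setIntegral_le_setIntegral_collapse hg hgc hK.isClosed hAm hAK hAfin
              (hint.mono_set hAK) (hgi.mono_set hAK))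
            (setIntegral_le_setIntegral_collapse hg hgc hK.isClosed hBm sdiff_subset hBfin
              (hint.mono_set sdiff_subset) (hgi.mono_set sdiff_subset))
      _ = ∫ x in K, g x ∂(μ.collapse A + μ.collapse (K \ A)) := by
          rw [restrict_add, integral_add_measure (integrable_collapse _ hAfin).restrict
            (integrable_collapse _ hBfin).restrict]

end TwoPoint

theorem ConcaveOn.comp_of_affineOn {E F : Type*} [AddCommGroup E] [Module ℝ E]
    [AddCommGroup F] [Module ℝ F] {s : Set E} {t : Set F} {V : F → ℝ} {φ : E → F}
    (hV : ConcaveOn ℝ t V) (hs : Convex ℝ s) (hφ : MapsTo φ s t)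
    (haff : ∀ x ∈ s, ∀ y ∈ s, ∀ a ∈ Icc (0 : ℝ) 1,
      φ (a • x + (1 - a) • y) = a • φ x + (1 - a) • φ y) :
    ConcaveOn ℝ s (V ∘ φ) := by
  refine ⟨hs, fun x hx y hy a b ha hb hab => ?_⟩
  obtain rfl : b = 1 - a := by linarith
  simp only [Function.comp_apply]
  rw [haff x hx y hy a ⟨ha, by linarith⟩]
  exact hV.2 (hφ hx) (hφ hy) ha hb hab

section Invest

variable [Fintype Ω]

lemma convex_invest (r : Ω → ℝ) : Convex ℝ (invest r) := by
  change Convex ℝ (stdSimplex ℝ Ω ∩ {q | 0 ≤ ∑ ω, q ω * r ω})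
  refine (convex_stdSimplex ℝ Ω).inter (convex_halfSpace_ge ⟨fun x y => ?_, fun c x => ?_⟩ 0)
  · simp [add_mul, Finset.sum_add_distrib]
  · simp [Finset.mul_sum, mul_assoc]

lemma isClosed_invest (r : Ω → ℝ) : IsClosed (invest r) :=
  show IsClosed (stdSimplex ℝ Ω ∩ {q | 0 ≤ ∑ ω, q ω * r ω}) from
    (isClosed_stdSimplex ℝ Ω).inter (isClosed_le continuous_const (by fun_prop))

lemma invest_subset_stdSimplex (r : Ω → ℝ) : invest r ⊆ stdSimplex ℝ Ω :=
  fun _ hq => hq.1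

lemma dppPayoff_le_dppPayoff {r : Ω → ℝ} {δ : ℝ} (hδ : δ ∈ Icc (0 : ℝ) 1)
    {φ : (Ω → ℝ) → Ω → ℝ} {V : (Ω → ℝ) → ℝ} {μ ν : Measure (Ω → ℝ)} [IsFiniteMeasure ν]
    (hI : μ (invest r) ≤ ν (invest r))
    (hV : ∫ q in stdSimplex ℝ Ω, V (φ q) ∂μ ≤ ∫ q in stdSimplex ℝ Ω, V (φ q) ∂ν) :
    dppPayoff r δ φ V μ ≤ dppPayoff r δ φ V ν := by
  unfold dppPayoff
  gcongr
  · linarith [hδ.2]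
  · exact measure_ne_top ν _
  · exact hδ.1

theorem exists_twoPoint_splitting_dppPayoff_ge {r : Ω → ℝ} {δ : ℝ} (hδ : δ ∈ Icc (0 : ℝ) 1)
    {φ : (Ω → ℝ) → Ω → ℝ} {V : (Ω → ℝ) → ℝ}
    (hW : ConcaveOn ℝ (stdSimplex ℝ Ω) (V ∘ φ)) (hWc : ContinuousOn (V ∘ φ) (stdSimplex ℝ Ω))
    {p : Ω → ℝ} {μ : Measure (Ω → ℝ)} (hμ : μ ∈ Splittings p) :
    ∃ ν ∈ {μ ∈ Splittings p | ∃ q₁ q₂ : Ω → ℝ, μ {q₁, q₂} = 1},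
      dppPayoff r δ φ V μ ≤ dppPayoff r δ φ V ν := by
  obtain ⟨hprob, hμK, hbar⟩ := hμ
  have hμK' : ∀ᵐ q ∂μ, q ∈ stdSimplex ℝ Ω := by
    rwa [ae_mem_iff_measure_eq (isClosed_stdSimplex ℝ Ω).measurableSet.nullMeasurableSet,
      measure_univ]
  obtain ⟨ν, hν, hνK, hνbar, ⟨q₁, q₂, hν₂⟩, hI, hVφ⟩ :=
    exists_twoPoint_dominating_measure (isCompact_stdSimplex ℝ Ω) (convex_stdSimplex ℝ Ω)
      (isClosed_invest r) (convex_invest r) (invest_subset_stdSimplex r) hμK' hW hWc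
  rw [measure_univ (μ := μ)] at hν hνK hν₂
  have hνprob : IsProbabilityMeasure ν := ⟨hν⟩
  exact ⟨ν, ⟨⟨hνprob, hνK, hνbar.trans hbar⟩, q₁, q₂, hν₂⟩, dppPayoff_le_dppPayoff hδ hI hVφ⟩

end Invest

theorem two_point_splittings_suffice_general [Fintype Ω]
    (r : Ω → ℝ) (δ : ℝ) (hδ : δ ∈ Ico (0 : ℝ) 1)
    (φ : (Ω → ℝ) → Ω → ℝ)
    (hφmaps : MapsTo φ (stdSimplex ℝ Ω) (stdSimplex ℝ Ω))
    (hφcont : ContinuousOn φ (stdSimplex ℝ Ω))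
    (hφaff : ∀ x ∈ stdSimplex ℝ Ω, ∀ y ∈ stdSimplex ℝ Ω, ∀ t ∈ Icc (0 : ℝ) 1,
      φ (t • x + (1 - t) • y) = t • φ x + (1 - t) • φ y)
    (V : (Ω → ℝ) → ℝ)
    (hVcont : ContinuousOn V (stdSimplex ℝ Ω))
    (hVconc : ConcaveOn ℝ (stdSimplex ℝ Ω) V)
    (p : Ω → ℝ) :
    sSup (dppPayoff r δ φ V '' Splittings p)
      = sSup (dppPayoff r δ φ V ''
          {μ ∈ Splittings p | ∃ q₁ q₂ : Ω → ℝ, μ {q₁, q₂} = 1}) := by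
  have hW : ConcaveOn ℝ (stdSimplex ℝ Ω) (V ∘ φ) :=
    hVconc.comp_of_affineOn (convex_stdSimplex ℝ Ω) hφmaps hφaff
  refine csSup_eq_csSup_of_forall_exists_le ?_ ?_
  · rintro _ ⟨μ, hμ, rfl⟩
    obtain ⟨ν, hν, hle⟩ := exists_twoPoint_splitting_dppPayoff_ge (Ico_subset_Icc_self hδ) hW
      (hVcont.comp hφcont hφmaps) hμ
    exact ⟨_, mem_image_of_mem _ hν, hle⟩
  · rintro _ ⟨μ, hμ, rfl⟩
    exact ⟨_, mem_image_of_mem _ hμ.1, le_rfl⟩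

/-- outside the investment region, splittings carried by at most two points
suffice: the supremum over all of `S(p)` equals the supremum over two-point splittings. -/
theorem two_point_splittings_suffice [Fintype Ω] [Nonempty Ω]
    (r : Ω → ℝ) (δ : ℝ) (hδ : δ ∈ Ico (0 : ℝ) 1)
    (φ : (Ω → ℝ) → Ω → ℝ)
    (hφmaps : MapsTo φ (stdSimplex ℝ Ω) (stdSimplex ℝ Ω))
    (hφcont : ContinuousOn φ (stdSimplex ℝ Ω))
    (hφaff : ∀ x ∈ stdSimplex ℝ Ω, ∀ y ∈ stdSimplex ℝ Ω, ∀ t ∈ Icc (0 : ℝ) 1,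
      φ (t • x + (1 - t) • y) = t • φ x + (1 - t) • φ y)
    (V : (Ω → ℝ) → ℝ)
    (hVb : ∃ C, ∀ p ∈ stdSimplex ℝ Ω, |V p| ≤ C)
    (hVcont : ContinuousOn V (stdSimplex ℝ Ω))
    (hVconc : ConcaveOn ℝ (stdSimplex ℝ Ω) V)
    (p : Ω → ℝ) (hp : p ∈ stdSimplex ℝ Ω) (hpJ : p ∉ invest r) :
    sSup (dppPayoff r δ φ V '' Splittings p)
      = sSup (dppPayoff r δ φ V ''
          {μ ∈ Splittings p | ∃ q₁ q₂ : Ω → ℝ, μ {q₁, q₂} = 1}) :=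
  two_point_splittings_suffice_general r δ hδ φ hφmaps hφcont hφaff V hVcont hVconc p

end
end

section
/- For every 1 ≤ k ≤ K and every p ∈ Ō(k), the greedy splitting p = a_I q_I + a_J q_J stays in Ō(k): if a_I > 0 then q_I ∈ Ō(k), and if a_J > 0 then q_J ∈ Ō(k). -/
/-!
Write `m = k*(p)`. Adding the negative payoffs one at a time makes `j ↦ L_j(p)` antitone, so
`p ∈ Ō(k)` gives `m ≤ k` and `L_{m-1}(p) ≥ L_{k-1}(p) ≥ 0`; this is exactly what makes
`0 ≤ π*(p) ≤ p`. The vector `π*(p)` agrees with `p` below `ω_m`, its mass at `ω_m` is chosen to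
cancel `L_{m-1}(p)`, and it vanishes beyond, so `L_j(π*(p)) = L_j(p)` for `j < m` and `= 0` for
`j ≥ m`. Hence both `π*(p)` and `p - π*(p)` satisfy `L_{k-1} ≥ 0 ≥ L_k`, and since each `L_j`
is linear, so do their normalisations.
-/

open Set

noncomputable section

variable {Ω : Type*}

/-- `L_k(p) = Σ_{ω∈Ω⁺} p(ω)r(ω) + Σ_{i≤k} p(ω_i)r(ω_i)`, where `ω_{i+1} = e i` enumerates
`Ω⁻` by decreasing payoff. -/
def Lfun [Fintype Ω] (r : Ω → ℝ) {K : ℕ} (e : Fin K → Ω) (k : ℕ) (p : Ω → ℝ) : ℝ :=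
  ∑ ω ∈ Finset.univ.filter (fun ω => 0 ≤ r ω), p ω * r ω
    + ∑ i ∈ Finset.univ.filter (fun i : Fin K => (i : ℕ) + 1 ≤ k), p (e i) * r (e i)

/-- `k*(p) = min {k ≥ 1 : L_k(p) ≤ 0}`. -/
def kstar [Fintype Ω] (r : Ω → ℝ) {K : ℕ} (e : Fin K → Ω) (p : Ω → ℝ) : ℕ :=
  sInf {k : ℕ | 1 ≤ k ∧ Lfun r e k p ≤ 0}

/-- The optimal solution `π*(p)` of the program (LP'): it agrees with `p` on `Ω⁺` and on
`ω_i` for `i < k*(p)`, vanishes on `ω_i` for `i > k*(p)`, and equals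
`−L_{k*(p)−1}(p)/r(ω_{k*(p)})` at `ω_{k*(p)}`. -/
def piStar [Fintype Ω] [DecidableEq Ω] (r : Ω → ℝ) {K : ℕ} (e : Fin K → Ω) (p : Ω → ℝ) :
    Ω → ℝ :=
  (fun ω => if 0 ≤ r ω then p ω else 0)
    + ∑ i : Fin K,
        (if (i : ℕ) + 1 < kstar r e p then p (e i)
         else if (i : ℕ) + 1 = kstar r e p then -(Lfun r e (kstar r e p - 1) p) / r (e i)
         else 0) • (Pi.single (e i) 1 : Ω → ℝ)

/-- The weight `a_I` of the greedy splitting: the total mass of `π*(p)`. -/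
def aI [Fintype Ω] [DecidableEq Ω] (r : Ω → ℝ) {K : ℕ} (e : Fin K → Ω) (p : Ω → ℝ) : ℝ :=
  ∑ ω, piStar r e p ω

/-- The posterior `q_I` of the greedy splitting: the normalization of `π*(p)`. -/
def qI [Fintype Ω] [DecidableEq Ω] (r : Ω → ℝ) {K : ℕ} (e : Fin K → Ω) (p : Ω → ℝ) :
    Ω → ℝ :=
  (aI r e p)⁻¹ • piStar r e p

/-- The posterior `q_J` of the greedy splitting: the normalization of `p − π*(p)`. -/
def qJ [Fintype Ω] [DecidableEq Ω] (r : Ω → ℝ) {K : ℕ} (e : Fin K → Ω) (p : Ω → ℝ) :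
    Ω → ℝ :=
  (1 - aI r e p)⁻¹ • (p - piStar r e p)

/-- The set `Ō(k) = {p ∈ Δ(Ω) : L_{k−1}(p) ≥ 0 ≥ L_k(p)}`. -/
def Obar [Fintype Ω] (r : Ω → ℝ) {K : ℕ} (e : Fin K → Ω) (k : ℕ) : Set (Ω → ℝ) :=
  {p | p ∈ stdSimplex ℝ Ω ∧ 0 ≤ Lfun r e (k - 1) p ∧ Lfun r e k p ≤ 0}

section Lfun

variable [Fintype Ω] {K : ℕ} {r : Ω → ℝ} {e : Fin K → Ω}

lemma Lfun_smul (c : ℝ) (j : ℕ) (q : Ω → ℝ) : Lfun r e j (c • q) = c * Lfun r e j q := by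
  simp only [Lfun, Pi.smul_apply, smul_eq_mul, mul_add, Finset.mul_sum, mul_assoc]

lemma Lfun_sub (j : ℕ) (p q : Ω → ℝ) : Lfun r e j (p - q) = Lfun r e j p - Lfun r e j q := by
  simp only [Lfun, Pi.sub_apply, sub_mul, Finset.sum_sub_distrib]
  ring

lemma Lfun_antitone {q : Ω → ℝ} (hre : ∀ i, r (e i) < 0) (hq : ∀ ω, 0 ≤ q ω) :
    Antitone fun j => Lfun r e j q := by
  intro j j' hjj'
  simp only [Lfun]
  apply add_le_add_right
  refine Finset.sum_le_sum_of_subset_of_nonpos' ?_ ?_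
  · exact Finset.monotone_filter_right _ fun i _ (hi : (i : ℕ) + 1 ≤ j) => hi.trans hjj'
  · exact fun i _ _ => mul_nonpos_of_nonneg_of_nonpos (hq _) (hre i).le

lemma Lfun_congr {j : ℕ} {p q : Ω → ℝ} (hplus : ∀ ω, 0 ≤ r ω → q ω = p ω)
    (hminus : ∀ i : Fin K, (i : ℕ) + 1 ≤ j → q (e i) = p (e i)) :
    Lfun r e j q = Lfun r e j p := by
  unfold Lfun
  congr 1
  · exact Finset.sum_congr rfl fun ω hω => by rw [hplus ω (Finset.mem_filter.1 hω).2]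
  · exact Finset.sum_congr rfl fun i hi => by rw [hminus i (Finset.mem_filter.1 hi).2]

variable (r e) in
lemma Lfun_succ (i : Fin K) (q : Ω → ℝ) :
    Lfun r e ((i : ℕ) + 1) q = Lfun r e i q + q (e i) * r (e i) := by
  have hfilter : Finset.univ.filter (fun i' : Fin K => (i' : ℕ) + 1 ≤ i + 1)
      = insert i (Finset.univ.filter (fun i' : Fin K => (i' : ℕ) + 1 ≤ i)) := by
    ext i'
    simp only [Finset.mem_filter, Finset.mem_univ, true_and, Finset.mem_insert, Fin.ext_iff]
    omega
  rw [Lfun, Lfun, hfilter, Finset.sum_insert (by simp)]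
  ring

lemma Lfun_eq_of_le {j j' : ℕ} {q : Ω → ℝ} (hjj' : j ≤ j')
    (hzero : ∀ i : Fin K, j ≤ i → q (e i) = 0) : Lfun r e j' q = Lfun r e j q := by
  unfold Lfun
  congr 1
  symm
  refine Finset.sum_subset (Finset.monotone_filter_right _
    fun i _ (hi : (i : ℕ) + 1 ≤ j) => hi.trans hjj') fun i _ hi => ?_
  simp only [Finset.mem_filter, Finset.mem_univ, true_and, not_le] at hi
  rw [hzero i (by omega), zero_mul]

lemma inv_sum_smul_mem_Obar {k : ℕ} {q : Ω → ℝ} (hq : ∀ ω, 0 ≤ q ω) (hsum : 0 < ∑ ω, q ω)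
    (hL₁ : 0 ≤ Lfun r e (k - 1) q) (hL₂ : Lfun r e k q ≤ 0) :
    (∑ ω, q ω)⁻¹ • q ∈ Obar r e k := by
  refine ⟨⟨fun ω => mul_nonneg (inv_nonneg.2 hsum.le) (hq ω), ?_⟩, ?_, ?_⟩
  · simp only [Pi.smul_apply, smul_eq_mul, ← Finset.mul_sum, inv_mul_cancel₀ hsum.ne']
  · rw [Lfun_smul]
    exact mul_nonneg (inv_nonneg.2 hsum.le) hL₁
  · rw [Lfun_smul]
    exact mul_nonpos_of_nonneg_of_nonpos (inv_nonneg.2 hsum.le) hL₂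

lemma kstar_mem {p : Ω → ℝ} {k : ℕ} (hk1 : 1 ≤ k) (hLk : Lfun r e k p ≤ 0) :
    1 ≤ kstar r e p ∧ Lfun r e (kstar r e p) p ≤ 0 :=
  Nat.sInf_mem (s := {n | 1 ≤ n ∧ Lfun r e n p ≤ 0}) ⟨k, hk1, hLk⟩

lemma kstar_le {p : Ω → ℝ} {k : ℕ} (hk1 : 1 ≤ k) (hLk : Lfun r e k p ≤ 0) :
    kstar r e p ≤ k :=
  Nat.sInf_le (show k ∈ {n | 1 ≤ n ∧ Lfun r e n p ≤ 0} from ⟨hk1, hLk⟩)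

end Lfun

section piStar

variable [Fintype Ω] [DecidableEq Ω] {K : ℕ} {r : Ω → ℝ} {e : Fin K → Ω}

lemma piStar_apply_of_nonneg (hre : ∀ i, r (e i) < 0) (p : Ω → ℝ) {ω : Ω} (hω : 0 ≤ r ω) :
    piStar r e p ω = p ω := by
  have hne : ∀ i, ω ≠ e i := fun i h => (hre i).not_ge (h ▸ hω)
  simp only [piStar, Pi.add_apply, Finset.sum_apply, Pi.smul_apply, smul_eq_mul,
    Pi.single_apply, hne, if_false, mul_zero, Finset.sum_const_zero, if_pos hω, add_zero]

lemma piStar_apply_e (he_inj : Function.Injective e) (hre : ∀ i, r (e i) < 0) (p : Ω → ℝ)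
    (i : Fin K) :
    piStar r e p (e i) =
      if (i : ℕ) + 1 < kstar r e p then p (e i)
      else if (i : ℕ) + 1 = kstar r e p then -(Lfun r e (kstar r e p - 1) p) / r (e i)
      else 0 := by
  simp only [piStar, Pi.add_apply, Finset.sum_apply, Pi.smul_apply, smul_eq_mul,
    Pi.single_apply, he_inj.eq_iff, if_neg (hre i).not_ge, mul_ite, mul_one, mul_zero,
    Finset.sum_ite_eq, Finset.mem_univ, if_true, zero_add]

lemma piStar_nonneg (he_inj : Function.Injective e)
    (he_range : ∀ ω, r ω < 0 ↔ ω ∈ Set.range e) {p : Ω → ℝ} (hp : ∀ ω, 0 ≤ p ω)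
    (hL : 0 ≤ Lfun r e (kstar r e p - 1) p) (ω : Ω) : 0 ≤ piStar r e p ω := by
  have hre : ∀ i, r (e i) < 0 := fun i => (he_range _).2 ⟨i, rfl⟩
  rcases le_or_gt 0 (r ω) with hω | hω
  · rw [piStar_apply_of_nonneg hre p hω]
    exact hp ω
  · obtain ⟨i, rfl⟩ := (he_range ω).1 hω
    rw [piStar_apply_e he_inj hre]
    split_ifs
    · exact hp _
    · exact div_nonneg_of_nonpos (neg_nonpos.2 hL) (hre i).le
    · exact le_rfl

lemma piStar_le (he_inj : Function.Injective e)
    (he_range : ∀ ω, r ω < 0 ↔ ω ∈ Set.range e) {p : Ω → ℝ} (hp : ∀ ω, 0 ≤ p ω)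
    (hL : Lfun r e (kstar r e p) p ≤ 0) (ω : Ω) : piStar r e p ω ≤ p ω := by
  have hre : ∀ i, r (e i) < 0 := fun i => (he_range _).2 ⟨i, rfl⟩
  rcases le_or_gt 0 (r ω) with hω | hω
  · exact (piStar_apply_of_nonneg hre p hω).le
  · obtain ⟨i, rfl⟩ := (he_range ω).1 hω
    rw [piStar_apply_e he_inj hre]
    split_ifs with _ him
    · exact le_rfl
    · have hsucc := Lfun_succ r e i p
      rw [him, show (i : ℕ) = kstar r e p - 1 by omega] at hsucc
      rw [div_le_iff_of_neg (hre i)]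
      linarith
    · exact hp _

lemma Lfun_piStar_of_lt (he_inj : Function.Injective e) (hre : ∀ i, r (e i) < 0)
    {p : Ω → ℝ} {j : ℕ} (hj : j < kstar r e p) :
    Lfun r e j (piStar r e p) = Lfun r e j p :=
  Lfun_congr (fun _ hω => piStar_apply_of_nonneg hre p hω)
    fun i hi => by rw [piStar_apply_e he_inj hre, if_pos (by omega)]

lemma Lfun_piStar_kstar (he_inj : Function.Injective e) (hre : ∀ i, r (e i) < 0)
    {p : Ω → ℝ} (hm1 : 1 ≤ kstar r e p) (hmK : kstar r e p ≤ K) :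
    Lfun r e (kstar r e p) (piStar r e p) = 0 := by
  set i : Fin K := ⟨kstar r e p - 1, by omega⟩
  have hi : (i : ℕ) + 1 = kstar r e p := by simp only [i]; omega
  have hsucc := Lfun_succ r e i (piStar r e p)
  rw [hi] at hsucc
  rw [hsucc, Lfun_piStar_of_lt he_inj hre (by omega), piStar_apply_e he_inj hre,
    if_neg hi.not_lt, if_pos hi, div_mul_cancel₀ _ (hre i).ne]
  simp only [i, add_neg_cancel]

lemma Lfun_piStar_of_le (he_inj : Function.Injective e) (hre : ∀ i, r (e i) < 0)
    {p : Ω → ℝ} (hm1 : 1 ≤ kstar r e p) (hmK : kstar r e p ≤ K) {j : ℕ}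
    (hj : kstar r e p ≤ j) : Lfun r e j (piStar r e p) = 0 := by
  rw [Lfun_eq_of_le hj fun i hi => by rw [piStar_apply_e he_inj hre, if_neg (by omega),
    if_neg (by omega)], Lfun_piStar_kstar he_inj hre hm1 hmK]

end piStar

theorem Obar_stable_under_greedy_general [Fintype Ω] [DecidableEq Ω] {K : ℕ}
    (r : Ω → ℝ) (e : Fin K → Ω)
    (he_inj : Function.Injective e)
    (he_range : ∀ ω, r ω < 0 ↔ ω ∈ Set.range e)
    (k : ℕ) (hk1 : 1 ≤ k) (hkK : k ≤ K)
    (p : Ω → ℝ) (hp : p ∈ Obar r e k) :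
    (0 < aI r e p → qI r e p ∈ Obar r e k) ∧
    (aI r e p < 1 → qJ r e p ∈ Obar r e k) := by
  obtain ⟨⟨hp0, hp1⟩, hLk1, hLk⟩ := hp
  have hre : ∀ i, r (e i) < 0 := fun i => (he_range _).2 ⟨i, rfl⟩
  obtain ⟨hm1, hLm⟩ := kstar_mem hk1 hLk
  have hmk : kstar r e p ≤ k := kstar_le hk1 hLk
  have hLm1 : 0 ≤ Lfun r e (kstar r e p - 1) p :=
    hLk1.trans (Lfun_antitone hre hp0 (by omega))
  have hπk : Lfun r e k (piStar r e p) = 0 :=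
    Lfun_piStar_of_le he_inj hre hm1 (hmk.trans hkK) hmk
  obtain ⟨hπk1, hπk1_le⟩ : 0 ≤ Lfun r e (k - 1) (piStar r e p) ∧
      Lfun r e (k - 1) (piStar r e p) ≤ Lfun r e (k - 1) p := by
    rcases hmk.eq_or_lt with hm | hm
    · rw [Lfun_piStar_of_lt he_inj hre (by omega)]
      exact ⟨hLk1, le_rfl⟩
    · rw [Lfun_piStar_of_le he_inj hre hm1 (hmk.trans hkK) (by omega)]
      exact ⟨le_rfl, hLk1⟩
  refine ⟨fun haI => inv_sum_smul_mem_Obar (piStar_nonneg he_inj he_range hp0 hLm1) haI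
    hπk1 hπk.le, fun haI => ?_⟩
  have hsum : ∑ ω, (p - piStar r e p) ω = 1 - aI r e p := by
    simp only [Pi.sub_apply, Finset.sum_sub_distrib, hp1, aI]
  rw [qJ, ← hsum]
  refine inv_sum_smul_mem_Obar (fun ω => sub_nonneg.2 (piStar_le he_inj he_range hp0 hLm ω))
    (by linarith) ?_ ?_
  · rw [Lfun_sub]
    linarith
  · rw [Lfun_sub, hπk]
    linarith

/-- each set `Ō(k)` is stable under the greedy splitting: if `p ∈ Ō(k)` then
the posteriors `q_I` and `q_J` of the greedy splitting at `p` (whenever their weights are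
positive) again belong to `Ō(k)`. -/
theorem Obar_stable_under_greedy [Fintype Ω] [DecidableEq Ω] {K : ℕ}
    (r : Ω → ℝ) (e : Fin K → Ω)
    (hK : 0 < K) (hplus : ∃ ω, 0 ≤ r ω)
    (he_inj : Function.Injective e)
    (he_range : ∀ ω, r ω < 0 ↔ ω ∈ Set.range e)
    (he_anti : Antitone fun i => r (e i))
    (k : ℕ) (hk1 : 1 ≤ k) (hkK : k ≤ K)
    (p : Ω → ℝ) (hp : p ∈ Obar r e k) :
    (0 < aI r e p → qI r e p ∈ Obar r e k) ∧
    (aI r e p < 1 → qJ r e p ∈ Obar r e k) :=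
  Obar_stable_under_greedy_general r e he_inj he_range k hk1 hkK p hp

end
end

section
/- Let V : Δ(Ω) → ℝ be bounded, continuous and concave and satisfy the dynamic programming equation. Then for every p ∈ Δ(Ω), V(p) ≤ γ*(p) := (1−δ)·Σ_{n=0}^∞ δ^n · r̂(φ^{(n)}(p)). (The first-best payoff γ* is an upper bound on the advisor's value.) -/
/-!
Splitting the current belief `p` into `μ ∈ S(p)` earns at most `r̂(p)` today, and by Jensen's
inequality for the concave function `V ∘ φ` at most `V(φ(p))` tomorrow; hence
`V(p) ≤ (1-δ) r̂(p) + δ V(φ(p))`. Unrolling this along the orbit `φ^{(n)}(p)` and letting the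
horizon grow, the remainder `δ^N V(φ^{(N)}(p))` vanishes because `V` is bounded.
-/

open MeasureTheory Set

noncomputable section

variable {Ω : Type*}

/-- `r̂(p) = sup_{μ ∈ S(p)} μ(I)`, the best current payoff at belief `p`. -/
def rhat [Fintype Ω] (r : Ω → ℝ) (p : Ω → ℝ) : ℝ :=
  sSup ((fun μ : Measure (Ω → ℝ) => (μ (invest r)).toReal) '' Splittings p)

theorem ConcaveOn.comp_of_affine_on {𝕜 E F β : Type*} [Ring 𝕜] [PartialOrder 𝕜] [IsOrderedRing 𝕜]
    [AddCommGroup E] [Module 𝕜 E] [AddCommGroup F] [Module 𝕜 F]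
    [AddCommMonoid β] [PartialOrder β] [SMul 𝕜 β]
    {s : Set E} {t : Set F} {f : E → F} {g : F → β}
    (hg : ConcaveOn 𝕜 t g) (hs : Convex 𝕜 s) (hf : MapsTo f s t)
    (haff : ∀ x ∈ s, ∀ y ∈ s, ∀ a ∈ Icc (0 : 𝕜) 1,
      f (a • x + (1 - a) • y) = a • f x + (1 - a) • f y) :
    ConcaveOn 𝕜 s (g ∘ f) := by
  refine ⟨hs, fun x hx y hy a b ha hb hab => ?_⟩
  obtain rfl : b = 1 - a := eq_sub_of_add_eq' hab
  have ha1 : a ≤ 1 := sub_nonneg.mp hb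
  simp only [Function.comp_apply, haff x hx y hy a ⟨ha, ha1⟩]
  exact hg.2 (hf hx) (hf hy) ha hb hab

section Splittings

variable [Fintype Ω] {p : Ω → ℝ} {μ : Measure (Ω → ℝ)}

theorem dirac_mem_splittings (hp : p ∈ stdSimplex ℝ Ω) : Measure.dirac p ∈ Splittings p :=
  ⟨inferInstance, Measure.dirac_apply_of_mem hp, integral_dirac id p⟩

theorem restrict_stdSimplex_of_mem_splittings (hμ : μ ∈ Splittings p) :
    μ.restrict (stdSimplex ℝ Ω) = μ :=
  have := hμ.1
  Measure.restrict_eq_self_of_ae_mem <|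
    (mem_ae_iff_prob_eq_one (isClosed_stdSimplex ℝ Ω).measurableSet).2 hμ.2.1

theorem integrable_of_mem_splittings {E : Type*} [NormedAddCommGroup E] {g : (Ω → ℝ) → E}
    (hg : ContinuousOn g (stdSimplex ℝ Ω)) (hμ : μ ∈ Splittings p) : Integrable g μ := by
  have := hμ.1
  rw [← restrict_stdSimplex_of_mem_splittings hμ]
  exact hg.integrableOn_compact (isCompact_stdSimplex ℝ Ω)

theorem setIntegral_le_of_mem_splittings {g : (Ω → ℝ) → ℝ}
    (hconc : ConcaveOn ℝ (stdSimplex ℝ Ω) g) (hcont : ContinuousOn g (stdSimplex ℝ Ω))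
    (hμ : μ ∈ Splittings p) : ∫ q in stdSimplex ℝ Ω, g q ∂μ ≤ g p := by
  have := hμ.1
  have hae : ∀ᵐ q ∂μ, q ∈ stdSimplex ℝ Ω := by
    rw [← restrict_stdSimplex_of_mem_splittings hμ]
    exact ae_restrict_mem (isClosed_stdSimplex ℝ Ω).measurableSet
  rw [restrict_stdSimplex_of_mem_splittings hμ, ← hμ.2.2]
  exact hconc.le_map_integral hcont (isClosed_stdSimplex ℝ Ω) hae
    (integrable_of_mem_splittings continuousOn_id hμ) (integrable_of_mem_splittings hcont hμ)

theorem toReal_le_one_of_mem_splittings (hμ : μ ∈ Splittings p) (s : Set (Ω → ℝ)) :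
    (μ s).toReal ≤ 1 :=
  have := hμ.1
  measureReal_le_one

theorem toReal_invest_le_rhat (r : Ω → ℝ) (hμ : μ ∈ Splittings p) :
    (μ (invest r)).toReal ≤ rhat r p :=
  le_csSup ⟨1, forall_mem_image.2 fun _ hν => toReal_le_one_of_mem_splittings hν _⟩ ⟨μ, hμ, rfl⟩

theorem rhat_nonneg (r : Ω → ℝ) (hp : p ∈ stdSimplex ℝ Ω) : 0 ≤ rhat r p :=
  ENNReal.toReal_nonneg.trans (toReal_invest_le_rhat r (dirac_mem_splittings hp))

theorem rhat_le_one (r : Ω → ℝ) (p : Ω → ℝ) : rhat r p ≤ 1 :=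
  Real.sSup_le (forall_mem_image.2 fun _ hμ => toReal_le_one_of_mem_splittings hμ _) zero_le_one

theorem dppPayoff_le_of_mem_splittings (r : Ω → ℝ) {δ : ℝ} (hδ : δ ∈ Icc (0 : ℝ) 1)
    {φ : (Ω → ℝ) → Ω → ℝ} {V : (Ω → ℝ) → ℝ}
    (hconc : ConcaveOn ℝ (stdSimplex ℝ Ω) (V ∘ φ))
    (hcont : ContinuousOn (V ∘ φ) (stdSimplex ℝ Ω)) (hμ : μ ∈ Splittings p) :
    dppPayoff r δ φ V μ ≤ (1 - δ) * rhat r p + δ * V (φ p) := by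
  have h1δ : 0 ≤ 1 - δ := sub_nonneg.2 hδ.2
  exact add_le_add (mul_le_mul_of_nonneg_left (toReal_invest_le_rhat r hμ) h1δ)
    (mul_le_mul_of_nonneg_left (setIntegral_le_of_mem_splittings hconc hcont hμ) hδ.1)

theorem SatisfiesDPP.le_rhat_add {r : Ω → ℝ} {δ : ℝ} {φ : (Ω → ℝ) → Ω → ℝ}
    {V : (Ω → ℝ) → ℝ} (hV : SatisfiesDPP r δ φ V) (hδ : δ ∈ Icc (0 : ℝ) 1)
    (hconc : ConcaveOn ℝ (stdSimplex ℝ Ω) (V ∘ φ))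
    (hcont : ContinuousOn (V ∘ φ) (stdSimplex ℝ Ω)) (hp : p ∈ stdSimplex ℝ Ω) :
    V p ≤ (1 - δ) * rhat r p + δ * V (φ p) := by
  rw [hV p hp]
  exact csSup_le ⟨_, mem_image_of_mem _ (dirac_mem_splittings hp)⟩ <|
    forall_mem_image.2 fun _ hμ => dppPayoff_le_of_mem_splittings r hδ hconc hcont hμ

end Splittings

theorem le_discounted_sum_add_pow_mul {δ : ℝ} (hδ : 0 ≤ δ) {v a : ℕ → ℝ}
    (hstep : ∀ n, v n ≤ (1 - δ) * a n + δ * v (n + 1)) (N : ℕ) :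
    v 0 ≤ (1 - δ) * ∑ n ∈ Finset.range N, δ ^ n * a n + δ ^ N * v N := by
  induction N with
  | zero => simp
  | succ N ih =>
    calc v 0 ≤ (1 - δ) * ∑ n ∈ Finset.range N, δ ^ n * a n + δ ^ N * v N := ih
      _ ≤ (1 - δ) * ∑ n ∈ Finset.range N, δ ^ n * a n
            + δ ^ N * ((1 - δ) * a N + δ * v (N + 1)) := by
        gcongr
        exact hstep N
      _ = (1 - δ) * ∑ n ∈ Finset.range (N + 1), δ ^ n * a n + δ ^ (N + 1) * v (N + 1) := by
        rw [Finset.sum_range_succ]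
        ring

theorem le_discounted_tsum {δ : ℝ} (hδ0 : 0 ≤ δ) (hδ1 : δ < 1) {v a : ℕ → ℝ} {C : ℝ}
    (hvC : ∀ n, v n ≤ C) (ha : Summable fun n => δ ^ n * a n)
    (hstep : ∀ n, v n ≤ (1 - δ) * a n + δ * v (n + 1)) :
    v 0 ≤ (1 - δ) * ∑' n, δ ^ n * a n := by
  have hlim : Filter.Tendsto (fun N => (1 - δ) * ∑ n ∈ Finset.range N, δ ^ n * a n + δ ^ N * C)
      Filter.atTop (nhds ((1 - δ) * ∑' n, δ ^ n * a n + 0 * C)) :=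
    (ha.hasSum.tendsto_sum_nat.const_mul _).add
      ((tendsto_pow_atTop_nhds_zero_of_lt_one hδ0 hδ1).mul_const C)
  rw [zero_mul, add_zero] at hlim
  refine ge_of_tendsto' hlim fun N => (le_discounted_sum_add_pow_mul hδ0 hstep N).trans ?_
  gcongr
  exact hvC N

theorem value_le_firstBest_general [Fintype Ω]
    (r : Ω → ℝ) (δ : ℝ) (hδ : δ ∈ Ico (0 : ℝ) 1)
    (φ : (Ω → ℝ) → Ω → ℝ)
    (hφmaps : MapsTo φ (stdSimplex ℝ Ω) (stdSimplex ℝ Ω))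
    (hφcont : ContinuousOn φ (stdSimplex ℝ Ω))
    (hφaff : ∀ x ∈ stdSimplex ℝ Ω, ∀ y ∈ stdSimplex ℝ Ω, ∀ t ∈ Icc (0 : ℝ) 1,
      φ (t • x + (1 - t) • y) = t • φ x + (1 - t) • φ y)
    (V : (Ω → ℝ) → ℝ)
    (hVb : ∃ C, ∀ p ∈ stdSimplex ℝ Ω, |V p| ≤ C)
    (hVcont : ContinuousOn V (stdSimplex ℝ Ω))
    (hVconc : ConcaveOn ℝ (stdSimplex ℝ Ω) V)
    (hV : SatisfiesDPP r δ φ V) :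
    ∀ p ∈ stdSimplex ℝ Ω,
      V p ≤ (1 - δ) * ∑' n : ℕ, δ ^ n * rhat r (φ^[n] p) := by
  intro p hp
  obtain ⟨C, hC⟩ := hVb
  have horbit : ∀ n, φ^[n] p ∈ stdSimplex ℝ Ω := fun n => hφmaps.iterate n hp
  have hstep : ∀ q ∈ stdSimplex ℝ Ω, V q ≤ (1 - δ) * rhat r q + δ * V (φ q) :=
    fun q => hV.le_rhat_add (Ico_subset_Icc_self hδ)
      (hVconc.comp_of_affine_on (convex_stdSimplex ℝ Ω) hφmaps hφaff)
      (hVcont.comp hφcont hφmaps)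
  have hsummable : Summable fun n => δ ^ n * rhat r (φ^[n] p) :=
    .of_nonneg_of_le (fun n => mul_nonneg (pow_nonneg hδ.1 n) (rhat_nonneg r (horbit n)))
      (fun n => mul_le_of_le_one_right (pow_nonneg hδ.1 n) (rhat_le_one r _))
      (summable_geometric_of_lt_one hδ.1 hδ.2)
  refine le_discounted_tsum hδ.1 hδ.2 (v := fun n => V (φ^[n] p))
    (fun n => (le_abs_self _).trans (hC _ (horbit n))) hsummable fun n => ?_
  simpa only [Function.iterate_succ_apply'] using hstep _ (horbit n)

/-- the first-best payoff `γ*(p) = (1−δ)·Σ_n δ^n r̂(φ^{(n)}(p))` is an upper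
bound on any bounded, continuous, concave solution of the dynamic programming equation. -/
theorem value_le_firstBest [Fintype Ω] [Nonempty Ω]
    (r : Ω → ℝ) (δ : ℝ) (hδ : δ ∈ Ico (0 : ℝ) 1)
    (φ : (Ω → ℝ) → Ω → ℝ)
    (hφmaps : MapsTo φ (stdSimplex ℝ Ω) (stdSimplex ℝ Ω))
    (hφcont : ContinuousOn φ (stdSimplex ℝ Ω))
    (hφaff : ∀ x ∈ stdSimplex ℝ Ω, ∀ y ∈ stdSimplex ℝ Ω, ∀ t ∈ Icc (0 : ℝ) 1,
      φ (t • x + (1 - t) • y) = t • φ x + (1 - t) • φ y)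
    (V : (Ω → ℝ) → ℝ)
    (hVb : ∃ C, ∀ p ∈ stdSimplex ℝ Ω, |V p| ≤ C)
    (hVcont : ContinuousOn V (stdSimplex ℝ Ω))
    (hVconc : ConcaveOn ℝ (stdSimplex ℝ Ω) V)
    (hV : SatisfiesDPP r δ φ V) :
    ∀ p ∈ stdSimplex ℝ Ω,
      V p ≤ (1 - δ) * ∑' n : ℕ, δ ^ n * rhat r (φ^[n] p) :=
  value_le_firstBest_general r δ hδ φ hφmaps hφcont hφaff V hVb hVcont hVconc hV
end
end
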